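/- Fix σ, σ' > 0, ε > 0 and t ∈ (0,1). Then γ_d(σ, σ', t, ε) ∈ (0,1), and for every ρ ∈ [0,1] the derivative of the one-point discrete-IMF correlation update satisfies 0 < ρ_new'(ρ) ≤ γ_d(σ, σ', t, ε). -/
import Mathlib

lemma key_pos (p s0 c ρ : ℝ) (hp : 0 < p) (hs : 2 * p ≤ s0) (hc : 0 < c) (hρ0 : 0 ≤ ρ) :
    0 < 2 * p ^ 2 * ρ ^ 2 + 2 * p * (s0 + c) * ρ + s0 * (s0 + c) - 2 * p ^ 2 := by
  nlinarith [sq_nonneg ρ, mul_pos hp hp, mul_nonneg (mul_nonneg hp.le (by linarith : (0:ℝ) ≤ s0 + c)) hρ0, mul_pos (by linarith : (0:ℝ) < s0) hc]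

lemma key_le (p s0 c ρ : ℝ) (hp : 0 < p) (hs : 2 * p ≤ s0) (hc : 0 < c) (hρ0 : 0 ≤ ρ)
    (hρ1 : ρ ≤ 1) :
    (2 * p ^ 2 * ρ ^ 2 + 2 * p * (s0 + c) * ρ + s0 * (s0 + c) - 2 * p ^ 2) * ((s0 + c) + p) ^ 2
      ≤ (s0 + 2 * p) * (s0 + c) * ((s0 + c) + 2 * p * ρ) ^ 2 := by
  have hM : (0:ℝ) < s0 + c := by linarith
  have hδ : (0:ℝ) ≤ 2*p*c*(s0+c)^2 + p^2*(s0+c)*(s0+2*c) + 4*p^3*(s0+c) + 2*p^4 := by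
    nlinarith [mul_pos (mul_pos hp hc) (mul_pos hM hM), mul_pos (mul_pos (mul_pos hp hp) hM) (by linarith : (0:ℝ) < s0 + 2*c), mul_pos (mul_pos (mul_pos hp hp) hp) hM, pow_pos hp 4]
  have hΔ1 : (0:ℝ) ≤ (s0+2*p)*(s0+c)*(2*(s0+c)+3*p)*p := by
    nlinarith [mul_pos (mul_pos (mul_pos (by linarith : (0:ℝ) < s0+2*p) hM) (by linarith : (0:ℝ) < 2*(s0+c)+3*p)) hp]
  have h1 : (0:ℝ) ≤ (1-ρ)*(p*(1+ρ)+(s0+c)) * (2*p*c*(s0+c)^2 + p^2*(s0+c)*(s0+2*c) + 4*p^3*(s0+c) + 2*p^4) := by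
    have : (0:ℝ) ≤ (1-ρ)*(p*(1+ρ)+(s0+c)) := mul_nonneg (by linarith) (by nlinarith [mul_nonneg hp.le hρ0])
    exact mul_nonneg this hδ
  have h2 : (0:ℝ) ≤ ρ*(p*ρ+(s0+c)) * ((s0+2*p)*(s0+c)*(2*(s0+c)+3*p)*p) := by
    have : (0:ℝ) ≤ ρ*(p*ρ+(s0+c)) := mul_nonneg hρ0 (by nlinarith [mul_nonneg hp.le hρ0])
    exact mul_nonneg this hΔ1
  nlinarith [h1, h2, mul_pos hp hM]

/-- One-point discrete-IMF correlation update
`ρ_new(ρ) = ((1-t)σ + tρσ')(tσ' + (1-t)ρσ) / ((1-t)²σ² + 2t(1-t)ρσσ' + t²σ'² + t(1-t)ε)`. -/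
noncomputable def rhoNew (σ σ' ε t ρ : ℝ) : ℝ :=
  (((1 - t) * σ + t * ρ * σ') * (t * σ' + (1 - t) * ρ * σ)) /
    ((1 - t) ^ 2 * σ ^ 2 + 2 * t * (1 - t) * ρ * σ * σ' + t ^ 2 * σ' ^ 2 + t * (1 - t) * ε)

/-- The discrete-IMF contraction factor `γ_d(σ, σ', t, ε)`. -/
noncomputable def gammaD (σ σ' t ε : ℝ) : ℝ :=
  1 / (1 + (t ^ 2 * (1 - t) ^ 2 * σ ^ 2 * σ' ^ 2
      + t * (1 - t) * (t ^ 2 * σ' ^ 2 + (1 - t) ^ 2 * σ ^ 2) * ε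
      + t ^ 2 * (1 - t) ^ 2 * ε ^ 2) /
    ((1 - t) ^ 2 * ((1 - t) * σ ^ 2 + t * σ * σ') ^ 2
      + t ^ 2 * (t * σ' ^ 2 + (1 - t) * σ * σ') ^ 2
      + t * (1 - t) * ((1 - t) * σ + t * σ') ^ 2 * ε))

/-- For `σ, σ' > 0`, `ε > 0`, `t ∈ (0,1)`, we have `γ_d(σ, σ', t, ε) ∈ (0,1)`,
and for every `ρ ∈ [0,1]` the derivative of the one-point discrete-IMF update satisfies
`0 < ρ_new'(ρ) ≤ γ_d(σ, σ', t, ε)`. -/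
theorem rhoNew_deriv_le_gammaD (σ σ' ε t : ℝ)
    (hσ : 0 < σ) (hσ' : 0 < σ') (hε : 0 < ε) (ht : t ∈ Set.Ioo (0 : ℝ) 1) :
    gammaD σ σ' t ε ∈ Set.Ioo (0 : ℝ) 1 ∧
    ∀ ρ ∈ Set.Icc (0 : ℝ) 1,
      0 < deriv (rhoNew σ σ' ε t) ρ ∧ deriv (rhoNew σ σ' ε t) ρ ≤ gammaD σ σ' t ε := by
  obtain ⟨ht0, ht1⟩ := ht
  have h1t : (0:ℝ) < 1 - t := by linarith
  have hu : 0 < (1 - t) * σ := mul_pos h1t hσ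
  have hv : 0 < t * σ' := mul_pos ht0 hσ'
  have hc : 0 < t * (1 - t) * ε := mul_pos (mul_pos ht0 h1t) hε
  have hp : 0 < ((1 - t) * σ) * (t * σ') := mul_pos hu hv
  have hs : 2 * (((1 - t) * σ) * (t * σ')) ≤ ((1 - t) * σ) ^ 2 + (t * σ') ^ 2 := by
    nlinarith [sq_nonneg ((1 - t) * σ - t * σ')]
  have hM : (0:ℝ) < ((1 - t) * σ) ^ 2 + (t * σ') ^ 2 + t * (1 - t) * ε := by positivity
  have hMp : (0:ℝ) < (((1 - t) * σ) ^ 2 + (t * σ') ^ 2 + t * (1 - t) * ε)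
      + ((1 - t) * σ) * (t * σ') := by positivity
  -- rewrite gammaD
  have hPpos : (0:ℝ) < (1 - t) ^ 2 * ((1 - t) * σ ^ 2 + t * σ * σ') ^ 2
      + t ^ 2 * (t * σ' ^ 2 + (1 - t) * σ * σ') ^ 2
      + t * (1 - t) * ((1 - t) * σ + t * σ') ^ 2 * ε := by
    have h : (1 - t) ^ 2 * ((1 - t) * σ ^ 2 + t * σ * σ') ^ 2
      + t ^ 2 * (t * σ' ^ 2 + (1 - t) * σ * σ') ^ 2
      + t * (1 - t) * ((1 - t) * σ + t * σ') ^ 2 * ε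
      = ((1 - t) * σ + t * σ') ^ 2 * (((1 - t) * σ) ^ 2 + (t * σ') ^ 2 + t * (1 - t) * ε) := by
      ring
    rw [h]
    have huv : (0:ℝ) < (1 - t) * σ + t * σ' := by linarith
    positivity
  have hγ : gammaD σ σ' t ε = ((1 - t) * σ + t * σ') ^ 2
        * (((1 - t) * σ) ^ 2 + (t * σ') ^ 2 + t * (1 - t) * ε)
      / ((((1 - t) * σ) ^ 2 + (t * σ') ^ 2 + t * (1 - t) * ε) + ((1 - t) * σ) * (t * σ')) ^ 2 := by
    unfold gammaD
    rw [div_eq_div_iff (by positivity) (by positivity)]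
    field_simp
    ring
  have huv : (0:ℝ) < (1 - t) * σ + t * σ' := by linarith
  constructor
  · rw [hγ]
    constructor
    · positivity
    · rw [div_lt_one (by positivity)]
      nlinarith [mul_pos hM hc, mul_pos hp hp]
  · intro ρ hρ
    obtain ⟨hρ0, hρ1⟩ := hρ
    have hDpos : (0:ℝ) < (1 - t) ^ 2 * σ ^ 2 + 2 * t * (1 - t) * ρ * σ * σ'
        + t ^ 2 * σ' ^ 2 + t * (1 - t) * ε := by
      nlinarith [mul_pos hu hu, mul_pos hv hv, mul_nonneg (mul_nonneg hp.le hρ0) (by norm_num : (0:ℝ) ≤ 2)]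
    have hA : HasDerivAt (fun x : ℝ => (1 - t) * σ + t * x * σ') (t * σ') ρ := by
      simpa using (((hasDerivAt_id ρ).const_mul t).mul_const σ').const_add ((1 - t) * σ)
    have hB : HasDerivAt (fun x : ℝ => t * σ' + (1 - t) * x * σ) ((1 - t) * σ) ρ := by
      simpa using (((hasDerivAt_id ρ).const_mul (1 - t)).mul_const σ).const_add (t * σ')
    have hD : HasDerivAt (fun x : ℝ => (1 - t) ^ 2 * σ ^ 2 + 2 * t * (1 - t) * x * σ * σ'
        + t ^ 2 * σ' ^ 2 + t * (1 - t) * ε) (2 * t * (1 - t) * σ * σ') ρ := by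
      simpa using (((((hasDerivAt_id ρ).const_mul (2 * t * (1 - t))).mul_const σ).mul_const
        σ').const_add ((1 - t) ^ 2 * σ ^ 2)).add_const (t ^ 2 * σ' ^ 2) |>.add_const
        (t * (1 - t) * ε)
    have hQ : HasDerivAt (rhoNew σ σ' ε t)
        (((t * σ' * (t * σ' + (1 - t) * ρ * σ)
            + ((1 - t) * σ + t * ρ * σ') * ((1 - t) * σ))
          * ((1 - t) ^ 2 * σ ^ 2 + 2 * t * (1 - t) * ρ * σ * σ'
            + t ^ 2 * σ' ^ 2 + t * (1 - t) * ε)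
          - ((1 - t) * σ + t * ρ * σ') * (t * σ' + (1 - t) * ρ * σ)
            * (2 * t * (1 - t) * σ * σ'))
        / ((1 - t) ^ 2 * σ ^ 2 + 2 * t * (1 - t) * ρ * σ * σ'
            + t ^ 2 * σ' ^ 2 + t * (1 - t) * ε) ^ 2) ρ := by
      have h := (hA.mul hB).div hD (ne_of_gt hDpos)
      exact h
    rw [hQ.deriv, hγ]
    have hkey1 := key_pos (((1 - t) * σ) * (t * σ')) (((1 - t) * σ) ^ 2 + (t * σ') ^ 2)
      (t * (1 - t) * ε) ρ hp hs hc hρ0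
    have hkey2 := key_le (((1 - t) * σ) * (t * σ')) (((1 - t) * σ) ^ 2 + (t * σ') ^ 2)
      (t * (1 - t) * ε) ρ hp hs hc hρ0 hρ1
    constructor
    · apply div_pos _ (pow_pos hDpos 2)
      exact hkey1.trans_eq (by ring)
    · rw [div_le_div_iff₀ (pow_pos hDpos 2) (by positivity)]
      calc _ = (2 * (((1 - t) * σ) * (t * σ')) ^ 2 * ρ ^ 2
            + 2 * (((1 - t) * σ) * (t * σ')) * ((((1 - t) * σ) ^ 2 + (t * σ') ^ 2) + t * (1 - t) * ε) * ρ
            + (((1 - t) * σ) ^ 2 + (t * σ') ^ 2) * ((((1 - t) * σ) ^ 2 + (t * σ') ^ 2) + t * (1 - t) * ε)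
            - 2 * (((1 - t) * σ) * (t * σ')) ^ 2)
            * (((((1 - t) * σ) ^ 2 + (t * σ') ^ 2) + t * (1 - t) * ε) + ((1 - t) * σ) * (t * σ')) ^ 2 := by ring
        _ ≤ ((((1 - t) * σ) ^ 2 + (t * σ') ^ 2) + 2 * (((1 - t) * σ) * (t * σ')))
            * ((((1 - t) * σ) ^ 2 + (t * σ') ^ 2) + t * (1 - t) * ε)
            * (((((1 - t) * σ) ^ 2 + (t * σ') ^ 2) + t * (1 - t) * ε) + 2 * (((1 - t) * σ) * (t * σ')) * ρ) ^ 2 := hkey2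
        _ = _ := by ring
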